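/- arXiv:1301.3220 — 2 statements merged into one kernel-verified Lean document; each statement's English description precedes it below -/
import Mathlib

section
/- Let C be the linear code over F of length en given as the row space of an ek×en full-rank matrix G satisfying G·Hᵀ = 0. Let G^{F,π} be the transformed generator matrix obtained from G by conjugating with the block Vandermonde matrices and the row/column permutations π. Then for every message m ∈ F^{ek}, the vector c = (m · G^{F,π})^{π^{-1}} · Ω^{-1}(n) satisfies c·Hᵀ = 0, i.e., c is a codeword of C; moreover the map m ↦ c is injective. -/
lemma blockMul {F : Type*} [Field F] {ι e' : Type*} [Fintype ι] [DecidableEq ι]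
    [Fintype e'] [DecidableEq e']
    (A B : Matrix e' e' F) (hAB : A * B = 1)
    (M N : Matrix (ι × e') (ι × e') F)
    (hM : ∀ p q, M p q = if p.1 = q.1 then A p.2 q.2 else 0)
    (hN : ∀ p q, N p q = if p.1 = q.1 then B p.2 q.2 else 0) :
    M * N = 1 := by
  ext ⟨i, a⟩ ⟨j, b⟩
  rw [Matrix.mul_apply, Fintype.sum_prod_type]
  simp only [hM, hN, Matrix.one_apply, Prod.mk.injEq]
  by_cases hij : i = j
  · subst hij
    rw [Finset.sum_eq_single i]
    · simp only [if_true, true_and]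
      rw [← Matrix.mul_apply, hAB, Matrix.one_apply]
    · intro c _ hc
      simp [Ne.symm hc]
    · simp
  · rw [Finset.sum_eq_zero, if_neg (by simp [hij])]
    intro c _
    by_cases hc : i = c
    · subst hc; simp [hij]
    · simp [hc]



/-- Encoding in the transform domain. For every message m ∈ F^{ek},
the vector c = (m · G^{F,π})^{π⁻¹} · Ω⁻¹(n) is a codeword of the code generated by
G (i.e. c·Hᵀ = 0), and the map m ↦ c is injective. Here G^{F,π} is obtained from
Ω⁻¹(k)·G·Ω(n) by the row/column permutations π interleaving the e blocks. -/
theorem stmt6 (r : ℕ) (hr : 0 < r) (F : Type*) [Field F] [Fintype F]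
    (hcard : Fintype.card F = 2 ^ r) (e : ℕ) (he : e = 2 ^ r - 1)
    (k n nk : ℕ) (α : F) (hα : orderOf α = e)
    (V Vinv : Matrix (Fin e) (Fin e) F)
    (hV : ∀ i j : Fin e, V i j = (α⁻¹) ^ ((i : ℕ) * (j : ℕ)))
    (hVinv : ∀ i j : Fin e, Vinv i j = α ^ ((i : ℕ) * (j : ℕ)))
    (G : Matrix (Fin k × Fin e) (Fin n × Fin e) F)
    (H : Matrix (Fin nk × Fin e) (Fin n × Fin e) F)
    (wG : Fin k → Fin n → Fin e → F)
    (hGcirc : ∀ (i : Fin k) (j : Fin n) (a b : Fin e), G (i, a) (j, b) = wG i j (b - a))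
    (hGH : G * H.transpose = 0)
    (hGrank : G.rank = k * e)  -- G has full rank ek
    (Ωkinv : Matrix (Fin k × Fin e) (Fin k × Fin e) F)
    (hΩkinv : ∀ p q, Ωkinv p q = if p.1 = q.1 then Vinv p.2 q.2 else 0)
    (Ωn : Matrix (Fin n × Fin e) (Fin n × Fin e) F)
    (hΩn : ∀ p q, Ωn p q = if p.1 = q.1 then V p.2 q.2 else 0)
    (Ωninv : Matrix (Fin n × Fin e) (Fin n × Fin e) F)
    (hΩninv : ∀ p q, Ωninv p q = if p.1 = q.1 then Vinv p.2 q.2 else 0)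
    -- the transformed generator matrix G^{F,π}:
    (GFπ : Matrix (Fin e × Fin k) (Fin e × Fin n) F)
    (hGFπ : GFπ = Matrix.reindex (Equiv.prodComm (Fin k) (Fin e))
        (Equiv.prodComm (Fin n) (Fin e)) (Ωkinv * G * Ωn))
    -- the encoding map m ↦ c:
    (enc : ((Fin e × Fin k) → F) → ((Fin n × Fin e) → F))
    (henc : ∀ m : (Fin e × Fin k) → F,
      enc m = Matrix.vecMul (fun p : Fin n × Fin e => (Matrix.vecMul m GFπ) (p.2, p.1)) Ωninv) :
    (∀ m : (Fin e × Fin k) → F, Matrix.vecMul (enc m) H.transpose = 0) ∧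
    Function.Injective enc := by
  -- characteristic 2
  have h2 : (2 : F) = 0 := by
    have h := FiniteField.cast_card_eq_zero F
    rw [hcard] at h
    push_cast at h
    exact pow_eq_zero_iff hr.ne' |>.mp h
  have hneg : (-1 : F) = 1 := by linear_combination -h2
  have he0 : 0 < e := by
    have : 2 ≤ 2 ^ r := Nat.one_lt_two_pow_iff.mpr hr.ne'
    omega
  have hαe : α ^ e = 1 := by rw [← hα]; exact pow_orderOf_eq_one α
  have hα0 : α ≠ 0 := by
    intro h0
    rw [h0, zero_pow he0.ne'] at hαe
    exact zero_ne_one hαe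
  have heF : (e : F) = 1 := by
    have h1 : (1:ℕ) ≤ 2 ^ r := Nat.one_le_two_pow
    rw [he, Nat.cast_sub h1, Nat.cast_pow, Nat.cast_ofNat, h2, zero_pow hr.ne', Nat.cast_one]
    linear_combination -h2
  have hpowinj : ∀ i j : Fin e, α ^ (i : ℕ) = α ^ (j : ℕ) → i = j := by
    intro i j hij
    exact Fin.ext (pow_injOn_Iio_orderOf
      (by rw [hα]; exact Set.mem_Iio.mpr i.isLt)
      (by rw [hα]; exact Set.mem_Iio.mpr j.isLt) hij)
  -- V * Vinv = 1
  have hVV : V * Vinv = 1 := by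
    ext i j
    rw [Matrix.mul_apply, Matrix.one_apply]
    have hterm : ∀ a : Fin e, V i a * Vinv a j
        = ((α⁻¹) ^ (i : ℕ) * α ^ (j : ℕ)) ^ (a : ℕ) := by
      intro a
      rw [hV, hVinv, mul_pow, ← pow_mul, ← pow_mul, Nat.mul_comm (j : ℕ) (a : ℕ)]
    rw [Finset.sum_congr rfl fun a _ => hterm a]
    set β := (α⁻¹) ^ (i : ℕ) * α ^ (j : ℕ) with hβ
    have hβe : β ^ e = 1 := by
      rw [hβ, mul_pow, ← pow_mul, ← pow_mul, Nat.mul_comm (i : ℕ) e,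
        Nat.mul_comm (j : ℕ) e, pow_mul, pow_mul, inv_pow, hαe, inv_one, one_pow, one_pow,
        one_mul]
    by_cases hij : i = j
    · subst hij
      have hβ1 : β = 1 := by
        rw [hβ, inv_pow, inv_mul_cancel₀ (pow_ne_zero _ hα0)]
      rw [if_pos rfl, hβ1]
      simp [heF]
    · have hβ1 : β ≠ 1 := by
        intro h1
        rw [hβ, inv_pow, inv_mul_eq_one₀ (pow_ne_zero _ hα0)] at h1
        exact hij (hpowinj i j h1)
      rw [Fin.sum_univ_eq_sum_range (fun a => β ^ a) e, geom_sum_eq hβ1, hβe, sub_self,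
        zero_div, if_neg hij]
  have hVinvV : Vinv * V = 1 := mul_eq_one_comm.mp hVV
  -- block identities
  have hΩnn : Ωn * Ωninv = 1 := blockMul V Vinv hVV _ _ hΩn hΩninv
  set Ωk : Matrix (Fin k × Fin e) (Fin k × Fin e) F :=
    fun p q => if p.1 = q.1 then V p.2 q.2 else 0 with hΩk
  have hΩkk : Ωkinv * Ωk = 1 := blockMul Vinv V hVinvV _ _ hΩkinv (fun p q => rfl)
  -- the key reformulation of enc
  have key : ∀ m : (Fin e × Fin k) → F,
      enc m = Matrix.vecMul (fun q : Fin k × Fin e => m (q.2, q.1)) (Ωkinv * G) := by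
    intro m
    have hre : (fun p : Fin n × Fin e => (Matrix.vecMul m GFπ) (p.2, p.1))
        = Matrix.vecMul (fun q : Fin k × Fin e => m (q.2, q.1)) (Ωkinv * G * Ωn) := by
      funext p
      simp only [hGFπ, Matrix.vecMul, dotProduct, Matrix.reindex_apply,
        Matrix.submatrix_apply, Equiv.prodComm_symm, Equiv.prodComm_apply, Prod.swap]
      exact Fintype.sum_equiv (Equiv.prodComm (Fin e) (Fin k)) _ _ (fun q => rfl)
    rw [henc, hre, Matrix.vecMul_vecMul, Matrix.mul_assoc (Ωkinv * G) Ωn Ωninv, hΩnn, Matrix.mul_one]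
  constructor
  · intro m
    rw [key, Matrix.vecMul_vecMul, Matrix.mul_assoc, hGH, Matrix.mul_zero, Matrix.vecMul_zero]
  · -- injectivity
    have hLI : LinearIndependent F (fun i => G i) := by
      rw [linearIndependent_iff_card_eq_finrank_span]
      have hsp := G.rank_eq_finrank_span_row
      rw [hGrank] at hsp
      simp [Set.finrank, Fintype.card_prod, Matrix.row] at hsp ⊢
      exact hsp
    have hGinj : Function.Injective G.vecMul := Matrix.vecMul_injective_iff.mpr hLI
    intro m1 m2 hm
    rw [key, key] at hm
    rw [← Matrix.vecMul_vecMul, ← Matrix.vecMul_vecMul] at hm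
    have h1 := hGinj hm
    have h2' : (fun q : Fin k × Fin e => m1 (q.2, q.1))
        = (fun q : Fin k × Fin e => m2 (q.2, q.1)) := by
      have := congrArg (fun v => Matrix.vecMul v Ωk) h1
      simpa [Matrix.vecMul_vecMul, hΩkk, Matrix.vecMul_one] using this
    funext q
    have := congrFun h2' (q.2, q.1)
    simpa using this
end

section
/- Let H be an (n−k)×n array of e×e circulants over GF(2) with transformed matrix H^{F,π} = diag(B_0,...,B_{e−1}) satisfying the conjugacy constraint. Then rank(B_{(2t) mod e}) = rank(B_t) for all t; consequently the rank of H equals Σ over conjugacy class representatives t_i of η_i·rank(B_{t_i}). -/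
open Matrix

/-- finrank of a pi-type submodule is the sum. -/
lemma finrank_submodule_pi {F : Type*} [Field F] {o : Type*} [Fintype o]
    {φ : o → Type*} [∀ t, AddCommGroup (φ t)] [∀ t, Module F (φ t)]
    [∀ t, Module.Finite F (φ t)]
    (p : ∀ t, Submodule F (φ t)) :
    Module.finrank F (Submodule.pi Set.univ p) = ∑ t, Module.finrank F (p t) := by
  let e : (Submodule.pi Set.univ p) ≃ₗ[F] (∀ t, p t) :=
    { toFun := fun x t => ⟨x.1 t, x.2 t trivial⟩
      invFun := fun v => ⟨fun t => v t, fun t _ => (v t).2⟩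
      left_inv := fun _ => rfl
      right_inv := fun _ => rfl
      map_add' := fun _ _ => rfl
      map_smul' := fun _ _ => rfl }
  rw [e.finrank_eq, Module.finrank_pi_fintype]

lemma rank_blockDiagonal'' {F : Type*} [Field F] {m n o : Type*}
    [Fintype m] [Fintype n] [Fintype o] [DecidableEq o]
    (M : o → Matrix m n F) :
    (Matrix.blockDiagonal M).rank = ∑ t, (M t).rank := by
  classical
  set f : ∀ t : o, (n → F) →ₗ[F] (m → F) := fun t => (M t).mulVecLin with hf
  set Lpi : (∀ _ : o, n → F) →ₗ[F] (∀ _ : o, m → F) :=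
    LinearMap.pi (fun t => (f t).comp (LinearMap.proj t)) with hLpi
  have hrange : LinearMap.range Lpi
      = Submodule.pi Set.univ (fun t => LinearMap.range (f t)) := by
    ext v
    constructor
    · rintro ⟨x, rfl⟩ t _
      exact ⟨x t, rfl⟩
    · intro hv
      choose x hx using fun t => hv t (Set.mem_univ t)
      exact ⟨x, funext fun t => hx t⟩
  let Em : (∀ _ : o, m → F) ≃ₗ[F] ((m × o) → F) :=
    { toFun := fun v p => v p.2 p.1
      invFun := fun g t i => g (i, t)
      left_inv := fun _ => rfl
      right_inv := fun _ => rfl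
      map_add' := fun _ _ => rfl
      map_smul' := fun _ _ => rfl }
  let En : (∀ _ : o, n → F) ≃ₗ[F] ((n × o) → F) :=
    { toFun := fun v p => v p.2 p.1
      invFun := fun g t i => g (i, t)
      left_inv := fun _ => rfl
      right_inv := fun _ => rfl
      map_add' := fun _ _ => rfl
      map_smul' := fun _ _ => rfl }
  have hml : (Matrix.blockDiagonal M).mulVecLin
      = Em.toLinearMap ∘ₗ Lpi ∘ₗ En.symm.toLinearMap := by
    apply LinearMap.ext
    intro v
    funext q
    obtain ⟨i, t⟩ := q
    simp only [mulVecLin_apply, mulVec, dotProduct, LinearMap.comp_apply,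
      LinearEquiv.coe_coe, Fintype.sum_prod_type]
    simp [Em, En, Lpi, f, blockDiagonal_apply, ite_mul, mul_comm,
      Finset.sum_ite_eq, Finset.sum_ite_eq']
    simp [mulVec, dotProduct]
  rw [Matrix.rank, hml, LinearMap.range_comp, LinearMap.range_comp_of_range_eq_top _
      (LinearEquiv.range _), LinearEquiv.finrank_map_eq, hrange,
      finrank_submodule_pi]
  rfl
open Matrix

lemma rank_map_ringEquiv {F : Type*} [Field F] {m n : Type*} [Fintype n]
    (σ : F ≃+* F) (M : Matrix m n F) :
    (M.map σ).rank = M.rank := by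
  have key : ∀ v : n → F, (M.map σ) *ᵥ (σ ∘ v) = σ ∘ (M *ᵥ v) := by
    intro v
    funext i
    simp [mulVec, dotProduct, map_sum, Matrix.map_apply]
  have key2 : ∀ w : n → F, (M.map σ) *ᵥ w = σ ∘ (M *ᵥ (σ.symm ∘ w)) := by
    intro w
    have := key (σ.symm ∘ w)
    rwa [show σ ∘ (σ.symm ∘ w) = w from funext fun j => σ.apply_symm_apply _] at this
  -- additive equiv between the two ranges
  have mem1 : ∀ x : m → F, x ∈ LinearMap.range M.mulVecLin →
      σ ∘ x ∈ LinearMap.range (M.map σ).mulVecLin := by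
    rintro _ ⟨v, rfl⟩
    exact ⟨σ ∘ v, key v⟩
  have mem2 : ∀ y : m → F, y ∈ LinearMap.range (M.map σ).mulVecLin →
      σ.symm ∘ y ∈ LinearMap.range M.mulVecLin := by
    rintro _ ⟨w, rfl⟩
    refine ⟨σ.symm ∘ w, ?_⟩
    rw [mulVecLin_apply]
    funext i
    have := congrFun (key2 w) i
    simp only [Function.comp_apply] at this ⊢
    rw [mulVecLin_apply, this, σ.symm_apply_apply]
  let j : LinearMap.range M.mulVecLin ≃+ LinearMap.range (M.map σ).mulVecLin :=
    { toFun := fun x => ⟨σ ∘ x.1, mem1 x.1 x.2⟩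
      invFun := fun y => ⟨σ.symm ∘ y.1, mem2 y.1 y.2⟩
      left_inv := fun x => by ext i; simp
      right_inv := fun y => by ext i; simp
      map_add' := fun x y => by ext i; simp }
  have hr : Module.rank F (LinearMap.range M.mulVecLin)
      = Module.rank F (LinearMap.range (M.map σ).mulVecLin) := by
    refine rank_eq_of_equiv_equiv (σ : F →+* F).toZeroHom j σ.bijective ?_
    intro r x
    apply Subtype.ext
    funext i
    show σ (r * (x : m → F) i) = σ r * σ ((x : m → F) i)
    exact _root_.map_mul σ _ _
  rw [Matrix.rank, Matrix.rank, Module.finrank, Module.finrank, hr]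

/-- For an array H of circulants over GF(2) whose transform is
diag(B_0,...,B_{e-1}) (so the conjugacy constraint B_{(2t) mod e} = B_t^{∘2} holds),
one has rank(B_{(2t) mod e}) = rank(B_t) for all t, and consequently
rank(H) = Σ over cyclotomic coset representatives t_i of η_i · rank(B_{t_i}). -/
theorem stmt18 (r : ℕ) (hr : 0 < r) (F : Type*) [Field F] [Fintype F]
    (hcard : Fintype.card F = 2 ^ r) (e : ℕ) (he : e = 2 ^ r - 1) [NeZero e]
    (nk n : ℕ) (α : F) (hα : orderOf α = e)
    -- H is an (n-k)×n array of e×e circulants over GF(2) ⊆ F: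
    (a : Fin nk → Fin n → Fin e → F)
    (ha : ∀ i j l, a i j l = 0 ∨ a i j l = 1)
    (H : Matrix (Fin nk × Fin e) (Fin n × Fin e) F)
    (hH : ∀ (i : Fin nk) (j : Fin n) (x y : Fin e), H (i, x) (j, y) = a i j (y - x))
    -- the diagonal blocks of the transformed matrix:
    (B : Fin e → Matrix (Fin nk) (Fin n) F)
    (hB : ∀ (t : Fin e) (i : Fin nk) (j : Fin n),
      B t i j = ∑ l : Fin e, a i j l * (α⁻¹) ^ ((l : ℕ) * (t : ℕ)))
    -- a set of cyclotomic coset representatives with coset sizes ηf,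
    -- so that the cosets partition {0,...,e-1}:
    (reps : Finset (Fin e)) (ηf : Fin e → ℕ)
    (eqv : (Σ t : reps, Fin (ηf t)) ≃ Fin e)
    (heqv : ∀ p : (Σ t : reps, Fin (ηf t)),
      eqv p = Fin.ofNat e (2 ^ ((p.2 : ℕ)) * ((p.1 : Fin e) : ℕ) : ℕ)) :
    (∀ t : Fin e, (B (2 * t)).rank = (B t).rank) ∧
    H.rank = ∑ t ∈ reps, ηf t * (B t).rank := by
  classical
  -- characteristic 2
  haveI : CharP F (ringChar F) := ringChar.charP F
  obtain ⟨np, hpprime, hcardp⟩ := FiniteField.card F (ringChar F)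
  have hp2 : ringChar F = 2 := by
    have h1 : ringChar F ∣ 2 ^ r := by
      rw [← hcard, hcardp]
      exact dvd_pow_self _ np.2.ne'
    have h2 := hpprime.dvd_of_dvd_pow h1
    exact (Nat.prime_dvd_prime_iff_eq hpprime Nat.prime_two).mp h2
  haveI hchar : CharP F 2 := hp2 ▸ ringChar.charP F
  -- the Frobenius as a ring equivalence
  let σ : F ≃+* F := RingEquiv.ofBijective (frobenius F 2)
    ((Finite.injective_iff_bijective).mp (frobenius F 2).injective)
  have hσ : ∀ x : F, σ x = x ^ 2 := fun x => rfl
  -- powers of α⁻¹ only depend on exponent mod e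
  have hα1 : α⁻¹ ^ e = 1 := by
    rw [inv_pow, ← hα, pow_orderOf_eq_one, inv_one]
  have hmod : ∀ m : ℕ, (α⁻¹) ^ m = (α⁻¹) ^ (m % e) := by
    intro m
    conv_lhs => rw [← Nat.div_add_mod m e]
    rw [pow_add, pow_mul, hα1, one_pow, one_mul]
  have hmod2 : ∀ m k : ℕ, m % e = k % e → (α⁻¹) ^ m = (α⁻¹) ^ k := by
    intro m k h; rw [hmod m, hmod k, h]
  -- Part 1 : conjugacy constraint
  have hBmap : ∀ t : Fin e, B (2 * t) = (B t).map σ := by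
    intro t
    ext i j
    rw [Matrix.map_apply, hB, hB]
    rw [map_sum σ _ _]
    refine Finset.sum_congr rfl fun l _ => ?_
    rw [hσ, mul_pow]
    have hal : a i j l ^ 2 = a i j l := by
      rcases ha i j l with h | h <;> rw [h] <;> ring
    rw [hal]
    congr 1
    rw [← pow_mul]
    apply hmod2
    have hv : ((2 * t : Fin e) : ℕ) = (2 * (t : ℕ)) % e := by
      open Fin.NatCast Fin.CommRing in rw [show (2 * t : Fin e) = ((2 * (t : ℕ) : ℕ) : Fin e) by
        push_cast [Fin.cast_val_eq_self]; ring, Fin.val_natCast]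
    rw [hv]
    have h3 := Nat.ModEq.mul_left (l : ℕ) (Nat.mod_modEq (2 * (t : ℕ)) e)
    have h4 : (l : ℕ) * (2 * (t : ℕ)) = (l : ℕ) * (t : ℕ) * 2 := by ring
    exact h3.trans (h4 ▸ Nat.ModEq.refl _)
  have part1 : ∀ t : Fin e, (B (2 * t)).rank = (B t).rank := by
    intro t
    rw [hBmap t, rank_map_ringEquiv]
  refine ⟨part1, ?_⟩
  -- iterate the conjugacy constraint
  open Fin.NatCast Fin.CommRing in
  have claim : ∀ (s : ℕ) (t : Fin e),
      (B (((2 ^ s * (t : ℕ) : ℕ) : Fin e))).rank = (B t).rank := by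
    intro s
    induction s with
    | zero => intro t; simp [Fin.cast_val_eq_self]
    | succ s ih =>
      intro t
      have h5 : ((2 ^ (s + 1) * (t : ℕ) : ℕ) : Fin e)
          = 2 * ((2 ^ s * (t : ℕ) : ℕ) : Fin e) := by
        push_cast
        ring
      rw [h5, part1, ih]
  -- the Fourier-type matrix
  set Φ : Matrix (Fin e) (Fin e) F :=
    Matrix.of fun x t : Fin e => α⁻¹ ^ ((x : ℕ) * (t : ℕ)) with hΦ
  have hΦv : Φ = Matrix.vandermonde (fun x : Fin e => α⁻¹ ^ (x : ℕ)) := by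
    ext x t
    simp [hΦ, Matrix.vandermonde, pow_mul]
  have hford : IsOfFinOrder α := by
    rw [← orderOf_pos_iff, hα]
    exact (NeZero.pos e)
  have hu : IsUnit α := hford.isUnit
  obtain ⟨u, hu'⟩ := hu
  have hou : orderOf u = e := by rw [← hα, ← hu', orderOf_units]
  have hinj : Function.Injective (fun x : Fin e => α⁻¹ ^ (x : ℕ)) := by
    intro x y hxy
    have hxy' : (u⁻¹ : Fˣ) ^ (x : ℕ) = (u⁻¹ : Fˣ) ^ (y : ℕ) := by
      apply Units.ext
      simpa [Units.val_pow_eq_pow_val, hu'] using hxy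
    have := pow_injOn_Iio_orderOf (x := (u⁻¹ : Fˣ))
      (by rw [Set.mem_Iio, orderOf_inv, hou]; exact x.2)
      (by rw [Set.mem_Iio, orderOf_inv, hou]; exact y.2) hxy'
    exact Fin.ext this
  have hΦdet : Φ.det ≠ 0 := by
    rw [hΦv]
    exact Matrix.det_vandermonde_ne_zero_iff.mpr hinj
  -- the invertible transform matrices
  set U : Matrix (Fin nk × Fin e) (Fin nk × Fin e) F :=
    (Matrix.blockDiagonal fun _ : Fin nk => Φ).submatrix Prod.swap Prod.swap with hU
  set V : Matrix (Fin n × Fin e) (Fin n × Fin e) F :=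
    (Matrix.blockDiagonal fun _ : Fin n => Φ).submatrix Prod.swap Prod.swap with hV
  have hUdet : IsUnit U.det := by
    rw [hU, show (Prod.swap : Fin nk × Fin e → Fin e × Fin nk)
        = ⇑(Equiv.prodComm (Fin nk) (Fin e)) from rfl,
      Matrix.det_submatrix_equiv_self, Matrix.det_blockDiagonal]
    simp only [Finset.prod_const]
    exact (isUnit_iff_ne_zero.mpr (pow_ne_zero _ hΦdet))
  have hVdet : IsUnit V.det := by
    rw [hV, show (Prod.swap : Fin n × Fin e → Fin e × Fin n)
        = ⇑(Equiv.prodComm (Fin n) (Fin e)) from rfl,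
      Matrix.det_submatrix_equiv_self, Matrix.det_blockDiagonal]
    simp only [Finset.prod_const]
    exact (isUnit_iff_ne_zero.mpr (pow_ne_zero _ hΦdet))
  -- the key identity H * V = U * blockDiagonal B
  have hkey : H * V = U * Matrix.blockDiagonal B := by
    ext p q
    obtain ⟨i, x⟩ := p
    obtain ⟨j, t⟩ := q
    rw [Matrix.mul_apply, Matrix.mul_apply]
    rw [Fintype.sum_prod_type, Fintype.sum_prod_type]
    have hVval : ∀ (j' : Fin n) (y : Fin e),
        V (j', y) (j, t) = if j' = j then Φ y t else 0 := by
      intro j' y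
      simp [hV, Matrix.blockDiagonal_apply]
    have hUval : ∀ (i' : Fin nk) (t' : Fin e),
        U (i, x) (i', t') = if i = i' then Φ x t' else 0 := by
      intro i' t'
      simp [hU, Matrix.blockDiagonal_apply]
    have hD : ∀ (i' : Fin nk) (t' : Fin e),
        Matrix.blockDiagonal B (i', t') (j, t) = if t' = t then B t' i' j else 0 := by
      intro i' t'
      simp [Matrix.blockDiagonal_apply]
    calc ∑ j' : Fin n, ∑ y : Fin e, H (i, x) (j', y) * V (j', y) (j, t)
        = ∑ y : Fin e, a i j (y - x) * Φ y t := by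
          simp only [hVval, hH, mul_ite, mul_zero]
          rw [Finset.sum_comm]
          simp [Finset.sum_ite_eq']
      _ = ∑ l : Fin e, a i j l * (α⁻¹ ^ ((x : ℕ) * (t : ℕ)) * α⁻¹ ^ ((l : ℕ) * (t : ℕ))) := by
          refine (Fintype.sum_equiv (Equiv.addLeft x) _ _ fun l => ?_).symm
          have h6 : (x + l) - x = l := by open Fin.CommRing in ring
          have h7 : Φ (x + l) t = α⁻¹ ^ ((x : ℕ) * (t : ℕ)) * α⁻¹ ^ ((l : ℕ) * (t : ℕ)) := by
            show α⁻¹ ^ (((x + l : Fin e) : ℕ) * (t : ℕ)) = _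
            rw [← pow_add, ← add_mul]
            apply hmod2
            have h8 : ((x + l : Fin e) : ℕ) = ((x : ℕ) + (l : ℕ)) % e := Fin.val_add x l
            rw [h8]
            exact Nat.ModEq.mul_right _ (Nat.mod_modEq _ e)
          simp only [Equiv.coe_addLeft]
          rw [h6, h7]
      _ = α⁻¹ ^ ((x : ℕ) * (t : ℕ)) * B t i j := by
          rw [hB, Finset.mul_sum]
          refine Finset.sum_congr rfl fun l _ => ?_
          ring
      _ = ∑ i' : Fin nk, ∑ t' : Fin e, U (i, x) (i', t') * Matrix.blockDiagonal B (i', t') (j, t) := by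
          symm
          rw [Finset.sum_eq_single_of_mem i (Finset.mem_univ i) ?h1]
          case h1 =>
            intro b _ hb
            apply Finset.sum_eq_zero
            intro t' _
            rw [hUval]
            simp [Ne.symm hb]
          rw [Finset.sum_eq_single_of_mem t (Finset.mem_univ t) ?h2]
          case h2 =>
            intro t' _ hb
            rw [hD]
            simp [hb]
          rw [hUval, hD]
          rw [if_pos rfl, if_pos rfl]
          rfl
  -- conclude on ranks
  have hrank : H.rank = (Matrix.blockDiagonal B).rank := by
    have h9 : (H * V).rank = H.rank :=
      Matrix.rank_mul_eq_left_of_isUnit_det V H hVdet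
    have h10 : (U * Matrix.blockDiagonal B).rank = (Matrix.blockDiagonal B).rank :=
      Matrix.rank_mul_eq_right_of_isUnit_det U _ hUdet
    rw [← h9, hkey, h10]
  rw [hrank, rank_blockDiagonal'']
  -- reindex the sum using the cyclotomic cosets
  rw [← Fintype.sum_equiv eqv (fun p => (B (eqv p)).rank) (fun t => (B t).rank) (fun p => rfl)]
  rw [← Finset.univ_sigma_univ, Finset.sum_sigma]
  rw [← Finset.sum_coe_sort reps (fun t => ηf t * (B t).rank)]
  refine Finset.sum_congr rfl fun t _ => ?_
  have h11 : ∀ s : Fin (ηf t), (B (eqv ⟨t, s⟩)).rank = (B (t : Fin e)).rank := by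
    intro s
    rw [heqv ⟨t, s⟩]
    exact claim (s : ℕ) (t : Fin e)
  simp [h11, Finset.sum_const, mul_comm]
end
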